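/- arXiv:1806.07657 — 3 statements merged into one kernel-verified Lean document; each statement's English description precedes it below -/
import Mathlib

section
/- For every β ∈ (0,1) and all real s < t, the function u ↦ (t-u)₊^{-β} - (s-u)₊^{-β} is Lebesgue integrable on ℝ and its integral over ℝ equals 0. -/
open Real Set Filter Topology MeasureTheory

/-! Substituting `u = t - x` and writing `d = t - s`, `r = -β`, the integrand becomes
`x₊ ^ r - (x - d)₊ ^ r`. It vanishes on `(-∞, 0]` and equals `x ^ r` on `(0, d]`, which
contributes `d ^ (r + 1) / (r + 1)`. On `(d, ∞)` it is the nonpositive derivative of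
`(x ^ (r + 1) - (x - d) ^ (r + 1)) / (r + 1)`, a function that equals `d ^ (r + 1) / (r + 1)`
at `d` and tends to `0` at infinity because `x ↦ x ^ (r + 1)` is concave with derivative tending
to `0`; so this piece is integrable and contributes exactly `-d ^ (r + 1) / (r + 1)`. -/

lemma Real.rpow_sub_rpow_le_mul_rpow_sub_one {p a b : ℝ} (hp0 : 0 ≤ p) (hp1 : p ≤ 1)
    (ha : 0 < a) (hab : a ≤ b) : b ^ p - a ^ p ≤ p * (b - a) * a ^ (p - 1) := by
  have hscale : b ^ p = a ^ p * (1 + (b - a) / a) ^ p := by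
    rw [← mul_rpow ha.le (by positivity)]
    congr 1
    field_simp
    ring
  have hbernoulli : (1 + (b - a) / a) ^ p ≤ 1 + p * ((b - a) / a) :=
    rpow_one_add_le_one_add_mul_self (by rw [le_div_iff₀ ha]; linarith) hp0 hp1
  calc b ^ p - a ^ p ≤ a ^ p * (1 + p * ((b - a) / a)) - a ^ p := by
        rw [hscale]; gcongr
    _ = p * (b - a) * a ^ (p - 1) := by
        rw [rpow_sub_one ha.ne']
        field_simp
        ring

lemma tendsto_rpow_sub_rpow_sub_atTop {p d : ℝ} (hp0 : 0 ≤ p) (hp1 : p < 1) (hd : 0 ≤ d) :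
    Tendsto (fun x : ℝ => x ^ p - (x - d) ^ p) atTop (𝓝 0) := by
  have hshift : Tendsto (fun x : ℝ => x - d) atTop atTop :=
    tendsto_atTop_add_const_right _ _ tendsto_id
  have hdecay : Tendsto (fun x : ℝ => p * d * (x - d) ^ (p - 1)) atTop (𝓝 0) := by
    have := ((tendsto_rpow_neg_atTop (by linarith : 0 < 1 - p)).comp hshift).const_mul (p * d)
    simpa [neg_sub] using this
  refine squeeze_zero' ?_ ?_ hdecay
  · filter_upwards [eventually_ge_atTop d] with x hx
    exact sub_nonneg.2 (rpow_le_rpow (by linarith) (by linarith) hp0)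
  · filter_upwards [eventually_gt_atTop d] with x hx
    simpa using rpow_sub_rpow_le_mul_rpow_sub_one hp0 hp1.le (by linarith : 0 < x - d)
      (by linarith : x - d ≤ x)

section

variable {r d : ℝ}

lemma hasDerivAt_rpow_add_one_sub_div {x : ℝ} (hr : r + 1 ≠ 0) (hx : d < x) (hd : 0 ≤ d) :
    HasDerivAt (fun y : ℝ => (y ^ (r + 1) - (y - d) ^ (r + 1)) / (r + 1))
      (x ^ r - (x - d) ^ r) x := by
  have h := (((hasDerivAt_id' x).rpow_const (p := r + 1) (Or.inl (by linarith))).sub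
    (((hasDerivAt_id' x).sub_const d).rpow_const (p := r + 1) (Or.inl (by linarith)))).div_const
    (r + 1)
  rw [add_sub_cancel_right, ← mul_sub, one_mul, mul_div_cancel_left₀ _ hr] at h
  exact h

lemma continuous_rpow_add_one_sub_div (hr : -1 < r) :
    Continuous (fun y : ℝ => (y ^ (r + 1) - (y - d) ^ (r + 1)) / (r + 1)) := by
  have := continuous_rpow_const (q := r + 1) (by linarith)
  fun_prop

lemma rpow_sub_rpow_sub_nonpos (hr : r ≤ 0) (hd : 0 ≤ d) {x : ℝ} (hx : d < x) :
    x ^ r - (x - d) ^ r ≤ 0 :=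
  sub_nonpos.2 (rpow_le_rpow_of_nonpos (by linarith) (by linarith) hr)

lemma tendsto_rpow_add_one_sub_div (hr1 : -1 < r) (hr0 : r < 0) (hd : 0 ≤ d) :
    Tendsto (fun y : ℝ => (y ^ (r + 1) - (y - d) ^ (r + 1)) / (r + 1)) atTop (𝓝 0) := by
  simpa using (tendsto_rpow_sub_rpow_sub_atTop (by linarith) (by linarith) hd).div_const (r + 1)

lemma integrableOn_Ioi_rpow_sub_rpow_sub (hr1 : -1 < r) (hr0 : r < 0) (hd : 0 ≤ d) :
    IntegrableOn (fun x : ℝ => x ^ r - (x - d) ^ r) (Ioi d) :=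
  integrableOn_Ioi_deriv_of_nonpos (continuous_rpow_add_one_sub_div hr1).continuousWithinAt
    (fun _ hx => hasDerivAt_rpow_add_one_sub_div (by linarith) hx hd)
    (fun _ hx => rpow_sub_rpow_sub_nonpos hr0.le hd hx)
    (tendsto_rpow_add_one_sub_div hr1 hr0 hd)

lemma integral_Ioi_rpow_sub_rpow_sub (hr1 : -1 < r) (hr0 : r < 0) (hd : 0 ≤ d) :
    ∫ x in Ioi d, (x ^ r - (x - d) ^ r) = -(d ^ (r + 1) / (r + 1)) := by
  rw [integral_Ioi_of_hasDerivAt_of_nonpos (continuous_rpow_add_one_sub_div hr1).continuousWithinAt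
    (fun _ hx => hasDerivAt_rpow_add_one_sub_div (by linarith) hx hd)
    (fun _ hx => rpow_sub_rpow_sub_nonpos hr0.le hd hx)
    (tendsto_rpow_add_one_sub_div hr1 hr0 hd)]
  simp [zero_rpow (by linarith : r + 1 ≠ 0)]

lemma integral_Ioc_rpow (hr : -1 < r) (hd : 0 ≤ d) :
    ∫ x in Ioc 0 d, x ^ r = d ^ (r + 1) / (r + 1) := by
  rw [← intervalIntegral.integral_of_le hd, integral_rpow (Or.inl hr),
    zero_rpow (by linarith : r + 1 ≠ 0), sub_zero]

lemma max_rpow_sub_max_sub_rpow_eqOn_Iic (hr : r ≠ 0) (hd : 0 ≤ d) :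
    EqOn (fun x : ℝ => max x 0 ^ r - max (x - d) 0 ^ r) 0 (Iic 0) := fun x hx => by
  simp [max_eq_right (mem_Iic.1 hx), max_eq_right (by linarith [mem_Iic.1 hx] : x - d ≤ 0),
    zero_rpow hr]

lemma max_rpow_sub_max_sub_rpow_eqOn_Ioc (hr : r ≠ 0) :
    EqOn (fun x : ℝ => max x 0 ^ r - max (x - d) 0 ^ r) (fun x => x ^ r) (Ioc 0 d) :=
  fun x hx => by
    simp [max_eq_left hx.1.le, max_eq_right (by linarith [hx.2] : x - d ≤ 0), zero_rpow hr]

lemma max_rpow_sub_max_sub_rpow_eqOn_Ioi (hd : 0 ≤ d) :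
    EqOn (fun x : ℝ => max x 0 ^ r - max (x - d) 0 ^ r) (fun x => x ^ r - (x - d) ^ r) (Ioi d) :=
  fun x hx => by
    simp [max_eq_left (by linarith [mem_Ioi.1 hx] : 0 ≤ x),
      max_eq_left (by linarith [mem_Ioi.1 hx] : 0 ≤ x - d)]

theorem integrable_max_rpow_sub_max_sub_rpow (hr1 : -1 < r) (hr0 : r < 0) (hd : 0 ≤ d) :
    Integrable (fun x : ℝ => max x 0 ^ r - max (x - d) 0 ^ r) := by
  rw [← integrableOn_univ, ← Iic_union_Ioi (a := (0 : ℝ)), ← Ioc_union_Ioi_eq_Ioi hd]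
  refine IntegrableOn.union ?_ (IntegrableOn.union ?_ ?_)
  · exact integrableOn_zero.congr_fun (max_rpow_sub_max_sub_rpow_eqOn_Iic hr0.ne hd).symm
      measurableSet_Iic
  · exact (intervalIntegral.intervalIntegrable_rpow' hr1).1.congr_fun
      (max_rpow_sub_max_sub_rpow_eqOn_Ioc hr0.ne).symm measurableSet_Ioc
  · exact (integrableOn_Ioi_rpow_sub_rpow_sub hr1 hr0 hd).congr_fun
      (max_rpow_sub_max_sub_rpow_eqOn_Ioi hd).symm measurableSet_Ioi

theorem integral_max_rpow_sub_max_sub_rpow (hr1 : -1 < r) (hr0 : r < 0) (hd : 0 ≤ d) :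
    ∫ x : ℝ, (max x 0 ^ r - max (x - d) 0 ^ r) = 0 := by
  have hint := integrable_max_rpow_sub_max_sub_rpow hr1 hr0 hd
  rw [← setIntegral_univ, ← Iic_union_Ioi (a := (0 : ℝ)),
    setIntegral_union (Iic_disjoint_Ioi le_rfl) measurableSet_Ioi hint.integrableOn
      hint.integrableOn, ← Ioc_union_Ioi_eq_Ioi hd,
    setIntegral_union Ioc_disjoint_Ioi_same measurableSet_Ioi hint.integrableOn hint.integrableOn,
    setIntegral_congr_fun measurableSet_Iic (max_rpow_sub_max_sub_rpow_eqOn_Iic hr0.ne hd),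
    setIntegral_congr_fun measurableSet_Ioc (max_rpow_sub_max_sub_rpow_eqOn_Ioc hr0.ne),
    setIntegral_congr_fun measurableSet_Ioi (max_rpow_sub_max_sub_rpow_eqOn_Ioi hd),
    integral_Ioc_rpow hr1 hd, integral_Ioi_rpow_sub_rpow_sub hr1 hr0 hd]
  simp

end

/-- For every β ∈ (0,1) and all real s < t, the function
u ↦ (t-u)₊^{-β} - (s-u)₊^{-β} is Lebesgue integrable on ℝ and its integral is 0.
Here (x)₊^{-β} is interpreted as x^{-β} for x > 0 and 0 otherwise
(note `(0:ℝ) ^ (-β) = 0` for the real power since -β ≠ 0). -/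
theorem stmt1 (β : ℝ) (hβ0 : 0 < β) (hβ1 : β < 1) (s t : ℝ) (hst : s < t) :
    Integrable (fun u : ℝ => (max (t - u) 0) ^ (-β) - (max (s - u) 0) ^ (-β)) ∧
    (∫ u : ℝ, ((max (t - u) 0) ^ (-β) - (max (s - u) 0) ^ (-β))) = 0 := by
  have hr1 : -1 < -β := by linarith
  have hr0 : -β < 0 := by linarith
  have hd : 0 ≤ t - s := by linarith
  have hshift : ∀ u : ℝ, s - u = (t - u) - (t - s) := fun u => by ring
  simp_rw [hshift]
  refine ⟨(integrable_max_rpow_sub_max_sub_rpow hr1 hr0 hd).comp_sub_left t, ?_⟩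
  rw [integral_sub_left_eq_self (fun x => max x 0 ^ (-β) - max (x - (t - s)) 0 ^ (-β)) volume t]
  exact integral_max_rpow_sub_max_sub_rpow hr1 hr0 hd
end

section
/- Let β ∈ (0,1/2) and κ₁, κ₂ > 0. Then z² + κ₁ z + κ₂ z^β ≠ 0 for all z ∈ ℂ \ {0} with Re(z) ≥ 0. -/
open Complex

/-- On the closed right half-plane `|arg z| ≤ π / 2`, so for `0 < β < 2` the angle `β arg z` of
`z ^ β` lies in `(-π, π)` and has the sign of `z.im`. -/
theorem Complex.im_mul_im_cpow_ofReal_pos {z : ℂ} {β : ℝ} (hre : 0 ≤ z.re) (him : z.im ≠ 0)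
    (hβ0 : 0 < β) (hβ2 : β < 2) : 0 < z.im * (z ^ (β : ℂ)).im := by
  have hnorm : 0 < ‖z‖ ^ β := Real.rpow_pos_of_pos (norm_pos_iff.2 fun h => him (by simp [h])) β
  obtain ⟨harg_lb, harg_ub⟩ := abs_le.1 (abs_arg_le_pi_div_two_iff.2 hre)
  rw [cpow_ofReal_im]
  rcases him.lt_or_gt with hneg | hpos
  · have hsin : Real.sin (arg z * β) < 0 :=
      Real.sin_neg_of_neg_of_neg_pi_lt (mul_neg_of_neg_of_pos (arg_neg_iff.2 hneg) hβ0)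
        (by nlinarith [Real.pi_pos])
    exact mul_pos_of_neg_of_neg hneg (mul_neg_of_pos_of_neg hnorm hsin)
  · have harg : 0 < arg z :=
      (arg_nonneg_iff.2 hpos.le).lt_of_ne fun h => hpos.ne' (arg_eq_zero_iff.1 h.symm).2
    have hsin : 0 < Real.sin (arg z * β) :=
      Real.sin_pos_of_pos_of_lt_pi (mul_pos harg hβ0) (by nlinarith [Real.pi_pos])
    exact mul_pos hpos (mul_pos hnorm hsin)

/-- For β ∈ (0,1/2) and κ₁, κ₂ > 0, z² + κ₁z + κ₂z^β ≠ 0 for all z ≠ 0 with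
Re(z) ≥ 0 (principal branch power). -/
theorem stmt7 (β κ₁ κ₂ : ℝ) (hβ0 : 0 < β) (hβ : β < 1/2) (h1 : 0 < κ₁) (h2 : 0 < κ₂) :
    ∀ z : ℂ, z ≠ 0 → 0 ≤ z.re → z ^ 2 + (κ₁ : ℂ) * z + (κ₂ : ℂ) * z ^ (β : ℂ) ≠ 0 := by
  intro z hz hre h
  by_cases him : z.im = 0
  · obtain ⟨x, hx, rfl⟩ : ∃ x : ℝ, 0 < x ∧ (x : ℂ) = z :=
      ⟨z.re, hre.lt_of_ne fun h0 => hz (ext h0.symm him), ext rfl him.symm⟩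
    rw [← ofReal_cpow hx.le] at h
    norm_cast at h
    nlinarith [Real.rpow_pos_of_pos hx β]
  · have him_eq : (2 * z.re + κ₁) * z.im ^ 2 + κ₂ * (z.im * (z ^ (β : ℂ)).im) = 0 := by
      have := congrArg (fun w => z.im * w.im) h
      simp only [add_im, mul_im, pow_two, ofReal_re, ofReal_im, zero_mul, add_zero, zero_im,
        mul_zero] at this
      linear_combination this
    nlinarith [z.im_mul_im_cpow_ofReal_pos hre him hβ0 (by linarith), sq_pos_of_ne_zero him]
end

section
/- For β ∈ (0,1/2) and u, v ∈ ℝ, ∫_{max(u,v)}^∞ (s-u)^{β-1} (s-v)^{β-1} ds = (Γ(β) Γ(1-2β) / Γ(1-β)) |u - v|^{2β-1}, where for u = v both sides are interpreted as +∞. -/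
/-!
For `v < u`, the substitution `s = v + (u - v) / x` maps `(0, 1)` onto `(u, ∞)` and turns the
integral into `(u - v) ^ (2β - 1)` times the Beta integral
`B(1 - 2β, β) = Γ(1 - 2β) Γ(β) / Γ(1 - β)`; the case `u < v` is symmetric. For `u = v` the
integrand is `(s - u) ^ (2β - 2)`, and no power of `s - u` is integrable on `(u, ∞)`.
-/

open MeasureTheory Set Real

theorem lintegral_Ioo_rpow_mul_one_sub_rpow {a b : ℝ} (ha : 0 < a) (hb : 0 < b) :
    ∫⁻ x in Ioo 0 1, ENNReal.ofReal (x ^ (a - 1) * (1 - x) ^ (b - 1))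
      = ENNReal.ofReal (ProbabilityTheory.beta a b) := by
  have hB := ProbabilityTheory.beta_pos ha hb
  have hsplit : ∀ x : ℝ, ENNReal.ofReal (x ^ (a - 1) * (1 - x) ^ (b - 1))
      = ENNReal.ofReal (ProbabilityTheory.beta a b) *
        ENNReal.ofReal (1 / ProbabilityTheory.beta a b * x ^ (a - 1) * (1 - x) ^ (b - 1)) := by
    intro x
    rw [← ENNReal.ofReal_mul hB.le]
    field_simp
  simp_rw [hsplit]
  rw [lintegral_const_mul _ (by fun_prop), ← ProbabilityTheory.lintegral_betaPDF,
    ProbabilityTheory.lintegral_betaPDF_eq_one ha hb, mul_one]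

theorem lintegral_Ioi_sub_rpow_eq_top (u r : ℝ) :
    ∫⁻ s in Ioi u, ENNReal.ofReal ((s - u) ^ r) = ⊤ := by
  have hshift := lintegral_image_eq_lintegral_abs_deriv_mul measurableSet_Ioi
    (fun x _ => ((hasDerivAt_id' x).add_const u).hasDerivWithinAt) (add_left_injective u).injOn
    (fun s => ENNReal.ofReal ((s - u) ^ r)) (s := Ioi 0) (f := fun x => x + u)
  simp only [image_add_const_Ioi, zero_add, abs_one, ENNReal.ofReal_one, one_mul,
    add_sub_cancel_right] at hshift
  rw [hshift, ← not_ne_iff, lintegral_ofReal_ne_top_iff_integrable (by fun_prop)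
    (ae_restrict_of_forall_mem measurableSet_Ioi fun x hx => rpow_nonneg (le_of_lt hx) r)]
  exact not_integrableOn_Ioi_rpow r

theorem lintegral_Ioi_eq_lintegral_Ioo_div {d : ℝ} (hd : 0 < d) (v : ℝ) (f : ℝ → ENNReal) :
    ∫⁻ s in Ioi (v + d), f s = ∫⁻ x in Ioo 0 1, ENNReal.ofReal (d / x ^ 2) * f (v + d / x) := by
  have himage : (fun x => v + d / x) '' Ioo 0 1 = Ioi (v + d) := by
    ext s
    constructor
    · rintro ⟨x, ⟨hx0, hx1⟩, rfl⟩
      have : d < d / x := (lt_div_iff₀ hx0).2 (by nlinarith)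
      simp only [mem_Ioi]
      linarith
    · intro hs
      have hsv : d < s - v := by simp only [mem_Ioi] at hs; linarith
      refine ⟨d / (s - v), ⟨div_pos hd (by linarith), (div_lt_one (by linarith)).2 hsv⟩, ?_⟩
      field_simp
      ring
  have hderiv : ∀ x ∈ Ioo (0 : ℝ) 1,
      HasDerivWithinAt (fun x => v + d / x) (-(d / x ^ 2)) (Ioo 0 1) x := by
    intro x hx
    have h := ((hasDerivAt_inv hx.1.ne').const_mul d).const_add v
    simp only [mul_neg, ← div_eq_mul_inv] at h
    exact h.hasDerivWithinAt
  have hinj : InjOn (fun x => v + d / x) (Ioo 0 1) := by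
    intro x hx y hy hxy
    have : d / x = d / y := add_left_cancel hxy
    rw [div_eq_div_iff hx.1.ne' hy.1.ne'] at this
    exact (mul_left_cancel₀ hd.ne' this).symm
  rw [← himage, lintegral_image_eq_lintegral_abs_deriv_mul measurableSet_Ioo hderiv hinj]
  refine setLIntegral_congr_fun measurableSet_Ioo fun x hx => ?_
  rw [abs_neg, abs_of_pos (by have := hx.1; positivity)]

theorem div_sq_mul_rpow_mul_rpow {d x : ℝ} (hd : 0 < d) (hx0 : 0 < x) (hx1 : x ≤ 1) (r : ℝ) :
    d / x ^ 2 * ((d * (1 - x) / x) ^ r * (d / x) ^ r)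
      = d ^ (2 * r + 1) * (x ^ (-2 * r - 2) * (1 - x) ^ r) := by
  have h1x : 0 ≤ 1 - x := by linarith
  have hd' : d ^ (2 * r + 1) = d ^ r * d ^ r * d := by
    rw [← rpow_add hd, ← rpow_add_one hd.ne']; ring_nf
  have hx' : x ^ (-2 * r - 2) = (x ^ r * x ^ r * x ^ 2)⁻¹ := by
    rw [← rpow_add hx0, ← rpow_natCast, ← rpow_add hx0, ← rpow_neg hx0.le]; ring_nf
  have hxr : x ^ r ≠ 0 := (rpow_pos_of_pos hx0 r).ne'
  rw [div_rpow (by positivity) hx0.le, mul_rpow hd.le h1x, div_rpow hd.le hx0.le, hd', hx']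
  field_simp

theorem lintegral_Ioi_sub_rpow_mul_sub_rpow_of_lt {β u v : ℝ} (hβ0 : 0 < β) (hβ : β < 1 / 2)
    (huv : v < u) :
    ∫⁻ s in Ioi u, ENNReal.ofReal ((s - u) ^ (β - 1) * (s - v) ^ (β - 1))
      = ENNReal.ofReal (ProbabilityTheory.beta (1 - 2 * β) β) *
        ENNReal.ofReal (u - v) ^ (2 * β - 1) := by
  obtain ⟨d, hd, rfl⟩ : ∃ d, 0 < d ∧ u = v + d := ⟨u - v, sub_pos.2 huv, by ring⟩
  have hintegrand : ∀ x ∈ Ioo (0 : ℝ) 1, ENNReal.ofReal (d / x ^ 2) *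
        ENNReal.ofReal ((v + d / x - (v + d)) ^ (β - 1) * (v + d / x - v) ^ (β - 1))
      = ENNReal.ofReal (d ^ (2 * β - 1)) *
        ENNReal.ofReal (x ^ (1 - 2 * β - 1) * (1 - x) ^ (β - 1)) := by
    intro x ⟨hx0, hx1⟩
    have hsub : v + d / x - (v + d) = d * (1 - x) / x := by field_simp; ring
    rw [← ENNReal.ofReal_mul (by positivity), ← ENNReal.ofReal_mul (by positivity), hsub,
      add_sub_cancel_left, div_sq_mul_rpow_mul_rpow hd hx0 hx1.le,
      show 2 * (β - 1) + 1 = 2 * β - 1 by ring, show -2 * (β - 1) - 2 = 1 - 2 * β - 1 by ring]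
  rw [lintegral_Ioi_eq_lintegral_Ioo_div hd, setLIntegral_congr_fun measurableSet_Ioo hintegrand,
    lintegral_const_mul' _ _ ENNReal.ofReal_ne_top,
    lintegral_Ioo_rpow_mul_one_sub_rpow (by linarith) hβ0, add_sub_cancel_left,
    ENNReal.ofReal_rpow_of_pos hd, mul_comm]

/-- For β ∈ (0,1/2) and u, v ∈ ℝ,
∫_{max(u,v)}^∞ (s-u)^{β-1}(s-v)^{β-1} ds = (Γ(β)Γ(1-2β)/Γ(1-β)) |u-v|^{2β-1},
as an identity in [0,∞] (both sides are +∞ when u = v, since the `ENNReal` power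
0^{2β-1} with 2β-1 < 0 equals ∞). -/
theorem stmt8 (β : ℝ) (hβ0 : 0 < β) (hβ : β < 1/2) (u v : ℝ) :
    (∫⁻ s in Set.Ioi (max u v), ENNReal.ofReal ((s - u) ^ (β - 1) * (s - v) ^ (β - 1)))
      = ENNReal.ofReal (Real.Gamma β * Real.Gamma (1 - 2*β) / Real.Gamma (1 - β)) *
        (ENNReal.ofReal |u - v|) ^ (2*β - 1) := by
  have hconst : Real.Gamma β * Real.Gamma (1 - 2*β) / Real.Gamma (1 - β)
      = ProbabilityTheory.beta (1 - 2 * β) β := by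
    rw [ProbabilityTheory.beta, mul_comm, show 1 - 2 * β + β = 1 - β by ring]
  rw [hconst]
  rcases lt_trichotomy u v with huv | rfl | hvu
  · simp_rw [mul_comm ((_ - u) ^ (β - 1))]
    rw [max_eq_right huv.le, lintegral_Ioi_sub_rpow_mul_sub_rpow_of_lt hβ0 hβ huv, abs_sub_comm,
      abs_of_pos (sub_pos.2 huv)]
  · have hsq : ∀ s ∈ Ioi u, ENNReal.ofReal ((s - u) ^ (β - 1) * (s - u) ^ (β - 1))
        = ENNReal.ofReal ((s - u) ^ (β - 1 + (β - 1))) := fun s hs => by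
      rw [rpow_add (sub_pos.2 hs)]
    rw [max_self, setLIntegral_congr_fun measurableSet_Ioi hsq, lintegral_Ioi_sub_rpow_eq_top,
      sub_self, abs_zero, ENNReal.ofReal_zero, ENNReal.zero_rpow_of_neg (by linarith),
      ENNReal.mul_top (by simpa using ProbabilityTheory.beta_pos (by linarith) hβ0)]
  · rw [max_eq_left hvu.le, lintegral_Ioi_sub_rpow_mul_sub_rpow_of_lt hβ0 hβ hvu,
      abs_of_pos (sub_pos.2 hvu)]
end
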